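/- arXiv:2310.16929 — 4 statements merged into one kernel-verified Lean document; each statement's English description precedes it below -/
import Mathlib

section
/- Let G be a graph on n vertices, let 1 ≤ h ≤ k ≤ n, and let L_h and L_k be the Laplacian matrices of the token graphs F_h(G) and F_k(G). Let S be the (k,h)-binomial matrix, with rows indexed by k-subsets A of [n] and columns by h-subsets X, and (S)_{AX} = 1 if X ⊂ A, else 0. Then L_k S = S L_h. -/
open Finset
open scoped Classical

def tokenGraph {V : Type*} [DecidableEq V] (G : SimpleGraph V) (k : ℕ) :
    SimpleGraph {s : Finset V // s.card = k} where
  Adj A B := ∃ a b, G.Adj a b ∧ A.1 \ B.1 = {a} ∧ B.1 \ A.1 = {b}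
  symm := by
    constructor
    rintro A B ⟨a, b, h, h1, h2⟩
    exact ⟨b, a, h.symm, h2, h1⟩
  loopless := by
    constructor
    rintro A ⟨a, b, h, h1, h2⟩
    rw [Finset.sdiff_self] at h1
    exact Finset.singleton_ne_empty a h1.symm

/-! For an edge `ab` of `G`, the transposition `τ = (a b)` moves a `k`-set `A` exactly when one
of `a`, `b` lies in `A`, and then it moves `A` to its neighbour across `ab` in the token graph.
Hence `(L_k f)(A) = ∑_{e ∈ E(G)} (f A - f (τ_e A))`, i.e. `L_k = ∑_e (1 - P_e)` with `P_e`
the permutation matrix of `τ_e` on `k`-sets. The inclusion matrix is invariant under the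
simultaneous action of every permutation of the vertices, so it intertwines the `P_e`, hence the
Laplacians. -/

namespace Finset

variable {V : Type*} [DecidableEq V] {A B : Finset V} {a b x : V}

theorem mem_map_swap : x ∈ A.map (Equiv.swap a b).toEmbedding ↔ Equiv.swap a b x ∈ A := by
  simp [mem_map_equiv]

theorem map_swap_eq_self (h : a ∈ A ↔ b ∈ A) : A.map (Equiv.swap a b).toEmbedding = A := by
  ext x
  rw [mem_map_swap, Equiv.swap_apply_def]
  split_ifs with hxa hxb
  · subst hxa; exact h.symm
  · subst hxb; exact h
  · rfl

theorem map_swap_eq_iff (ha : a ∈ A) (hb : b ∉ A) :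
    A.map (Equiv.swap a b).toEmbedding = B ↔ A \ B = {a} ∧ B \ A = {b} := by
  simp only [Finset.ext_iff, mem_map_swap, mem_sdiff, mem_singleton, Equiv.swap_apply_def]
  constructor
  · intro h
    constructor <;> intro x <;> have := h x <;> split_ifs at this <;> grind
  · rintro ⟨h1, h2⟩ x
    split_ifs <;> grind

end Finset

open Matrix

variable {V : Type*} [DecidableEq V]

def permTokens (σ : Equiv.Perm V) {k : ℕ} (A : {s : Finset V // s.card = k}) :
    {s : Finset V // s.card = k} :=
  ⟨A.1.map σ.toEmbedding, by rw [card_map, A.2]⟩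

def Sym2.transposition (e : Sym2 V) : Equiv.Perm V :=
  Sym2.lift ⟨Equiv.swap, Equiv.swap_comm⟩ e

@[simp]
theorem Sym2.transposition_mk (a b : V) : Sym2.transposition s(a, b) = Equiv.swap a b := rfl

theorem permTokens_swap_self {k : ℕ} (a b : V) (A : {s : Finset V // s.card = k}) :
    permTokens (Equiv.swap a b) (permTokens (Equiv.swap a b) A) = A := by
  ext x
  simp [permTokens]

theorem exists_mk_of_permTokens_transposition_ne {k : ℕ} {e : Sym2 V}
    {A : {s : Finset V // s.card = k}} (he : permTokens e.transposition A ≠ A) :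
    ∃ a b, e = s(a, b) ∧ a ∈ A.1 ∧ b ∉ A.1 := by
  induction e using Sym2.ind with
  | _ a b =>
    by_cases hab : a ∈ A.1 ↔ b ∈ A.1
    · exact absurd (Subtype.ext (map_swap_eq_self hab)) he
    · by_cases ha : a ∈ A.1
      · exact ⟨a, b, rfl, ha, by tauto⟩
      · exact ⟨b, a, Sym2.eq_swap, by tauto, ha⟩

theorem tokenGraph_adj_iff (G : SimpleGraph V) {k : ℕ} {A B : {s : Finset V // s.card = k}} :
    (tokenGraph G k).Adj A B ↔
      ∃ a b, G.Adj a b ∧ a ∈ A.1 ∧ b ∉ A.1 ∧ permTokens (Equiv.swap a b) A = B := by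
  constructor
  · rintro ⟨a, b, hab, hA, hB⟩
    have ha : a ∈ A.1 := (mem_sdiff.1 (hA ▸ mem_singleton_self a)).1
    have hb : b ∉ A.1 := (mem_sdiff.1 (hB ▸ mem_singleton_self b)).2
    exact ⟨a, b, hab, ha, hb, Subtype.ext ((map_swap_eq_iff ha hb).2 ⟨hA, hB⟩)⟩
  · rintro ⟨a, b, hab, ha, hb, rfl⟩
    exact ⟨a, b, hab, (map_swap_eq_iff ha hb).1 rfl⟩

section

variable [Fintype V] (G : SimpleGraph V) [Fintype G.edgeSet] {k : ℕ}
  [DecidableRel (tokenGraph G k).Adj]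

theorem sum_neighborFinset_tokenGraph {M : Type*} [AddCommMonoid M]
    (A : {s : Finset V // s.card = k}) (g : {s : Finset V // s.card = k} → M) :
    ∑ B ∈ (tokenGraph G k).neighborFinset A, g B =
      ∑ e ∈ G.edgeFinset with permTokens e.transposition A ≠ A,
        g (permTokens e.transposition A) := by
  symm
  refine sum_nbij (fun e => permTokens e.transposition A) ?_ ?_ ?_ fun _ _ => rfl
  · intro e he
    obtain ⟨he, hne⟩ := mem_filter.1 he
    obtain ⟨a, b, rfl, ha, hb⟩ := exists_mk_of_permTokens_transposition_ne hne
    rw [SimpleGraph.mem_neighborFinset, tokenGraph_adj_iff]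
    exact ⟨a, b, SimpleGraph.mem_edgeFinset.1 he, ha, hb, rfl⟩
  · intro e he e' he' h
    obtain ⟨a, b, rfl, ha, hb⟩ := exists_mk_of_permTokens_transposition_ne (mem_filter.1 he).2
    obtain ⟨c, d, rfl, hc, hd⟩ := exists_mk_of_permTokens_transposition_ne (mem_filter.1 he').2
    obtain ⟨hac, hbd⟩ := (map_swap_eq_iff ha hb).1 (congrArg Subtype.val h)
    obtain ⟨hca, hdb⟩ := (map_swap_eq_iff hc hd).1 rfl
    rw [singleton_injective (hac.symm.trans hca), singleton_injective (hbd.symm.trans hdb)]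
  · intro B hB
    obtain ⟨a, b, hab, ha, hb, rfl⟩ :=
      (tokenGraph_adj_iff G).1 ((SimpleGraph.mem_neighborFinset _ _ _).1 hB)
    refine ⟨s(a, b), mem_filter.2 ⟨SimpleGraph.mem_edgeFinset.2 hab, ?_⟩, rfl⟩
    exact ((tokenGraph G k).ne_of_adj ((tokenGraph_adj_iff G).2 ⟨a, b, hab, ha, hb, rfl⟩)).symm

theorem lapMatrix_tokenGraph_mulVec_apply {R : Type*} [Ring R]
    (f : {s : Finset V // s.card = k} → R) (A : {s : Finset V // s.card = k}) :
    ((tokenGraph G k).lapMatrix R *ᵥ f) A =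
      ∑ e ∈ G.edgeFinset, (f A - f (permTokens e.transposition A)) := by
  have hsum : ((tokenGraph G k).lapMatrix R *ᵥ f) A =
      ∑ B ∈ (tokenGraph G k).neighborFinset A, (f A - f B) := by
    rw [SimpleGraph.lapMatrix_mulVec_apply, sum_sub_distrib, sum_const,
      SimpleGraph.card_neighborFinset_eq_degree, nsmul_eq_mul]
  rw [hsum, sum_neighborFinset_tokenGraph, sum_filter_of_ne]
  intro e _ h hA
  exact h (by rw [hA, sub_self])

theorem lapMatrix_tokenGraph_mul_comm {R : Type*} [CommRing R] {h : ℕ}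
    [DecidableRel (tokenGraph G h).Adj]
    (S : Matrix {s : Finset V // s.card = k} {s : Finset V // s.card = h} R)
    (hS : ∀ (σ : Equiv.Perm V) A X, S (permTokens σ A) (permTokens σ X) = S A X) :
    (tokenGraph G k).lapMatrix R * S = S * (tokenGraph G h).lapMatrix R := by
  ext A X
  have hL : ((tokenGraph G k).lapMatrix R * S) A X =
      ((tokenGraph G k).lapMatrix R *ᵥ fun B => S B X) A := rfl
  have hR : (S * (tokenGraph G h).lapMatrix R) A X = ((tokenGraph G h).lapMatrix R *ᵥ S A) X := by
    conv_rhs => rw [← (SimpleGraph.isSymm_lapMatrix _ _).eq, mulVec_transpose]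
    rfl
  rw [hL, hR, lapMatrix_tokenGraph_mulVec_apply, lapMatrix_tokenGraph_mulVec_apply]
  refine sum_congr rfl fun e _ => ?_
  induction e using Sym2.ind with
  | _ a b => rw [Sym2.transposition_mk, ← hS (Equiv.swap a b) A (permTokens (Equiv.swap a b) X),
      permTokens_swap_self]

end

theorem token_laplacian_commutation_general (n h k : ℕ) (G : SimpleGraph (Fin n))
    (S : Matrix {s : Finset (Fin n) // s.card = k} {s : Finset (Fin n) // s.card = h} ℝ)
    (hS : ∀ A X, S A X = if X.1 ⊆ A.1 then 1 else 0) :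
    (tokenGraph G k).lapMatrix ℝ * S = S * (tokenGraph G h).lapMatrix ℝ := by
  refine lapMatrix_tokenGraph_mul_comm G S fun σ A X => ?_
  simp only [hS, permTokens, map_subset_map]

theorem token_laplacian_commutation (n h k : ℕ) (G : SimpleGraph (Fin n))
    (hh : 1 ≤ h) (hhk : h ≤ k) (hkn : k ≤ n)
    (S : Matrix {s : Finset (Fin n) // s.card = k} {s : Finset (Fin n) // s.card = h} ℝ)
    (hS : ∀ A X, S A X = if X.1 ⊆ A.1 then 1 else 0) :
    (tokenGraph G k).lapMatrix ℝ * S = S * (tokenGraph G h).lapMatrix ℝ :=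
  token_laplacian_commutation_general n h k G S hS
end

section
/- For every graph G on n vertices and every 1 ≤ k ≤ ⌊n/2⌋, the k-algebraic connectivity satisfies α_k(G) ≤ k(n−k+1), and the k-spectral radius satisfies ρ_k(G) ≤ k(n−k+1). -/
/-!
Adding edges to `G` only adds edges to its token graph, so the Laplacian quadratic form of
`F_k(G)` is dominated by that of `F_k(K_n) = J(n,k)`. If `W` is the inclusion matrix of
`(k-1)`-subsets in `k`-subsets, then `(W Wᵀ)_{AB} = C(|A ∩ B|, k-1)`, which cancels the
off-diagonal part of `L(J(n,k))`: hence `L(J(n,k)) + W Wᵀ` is diagonal with entries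
`deg A + k ≤ k(n-k) + k`. As `W Wᵀ` is positive semidefinite, every Laplacian eigenvalue of
`F_k(G)`, in particular `α_k(G)` and `ρ_k(G)`, is at most `k(n-k+1)`.
-/

open Finset
open scoped Classical

noncomputable def lapSpec {W : Type*} [Fintype W] [DecidableEq W] (H : SimpleGraph W) :
    Multiset ℝ :=
  (H.lapMatrix ℝ).charpoly.roots

open Matrix SimpleGraph

namespace Matrix

variable {ι : Type*} [Fintype ι] [DecidableEq ι]

theorem le_of_mem_roots_charpoly_of_dotProduct_mulVec_le {M : Matrix ι ι ℝ} {c x : ℝ}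
    (hM : ∀ v, v ⬝ᵥ (M *ᵥ v) ≤ c * (v ⬝ᵥ v)) (hx : x ∈ M.charpoly.roots) : x ≤ c := by
  have heig : Module.End.HasEigenvalue M.toLin' x := by
    rw [Module.End.hasEigenvalue_iff_isRoot_charpoly, Matrix.charpoly_toLin']
    exact (Polynomial.mem_roots'.mp hx).2
  obtain ⟨v, hv⟩ := heig.exists_hasEigenvector
  have hMv : M *ᵥ v = x • v := by simpa using hv.apply_eq_smul
  have hvv : 0 < v ⬝ᵥ v := by simpa using dotProduct_star_self_pos_iff.mpr hv.2
  have h := hM v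
  rw [hMv, dotProduct_smul, smul_eq_mul] at h
  exact le_of_mul_le_mul_right h hvv

end Matrix

namespace SimpleGraph

variable {V : Type*} [Fintype V] [DecidableEq V]

theorem dotProduct_lapMatrix_mulVec_mono {H H' : SimpleGraph V} [DecidableRel H.Adj]
    [DecidableRel H'.Adj] (h : H ≤ H') (v : V → ℝ) :
    v ⬝ᵥ (H.lapMatrix ℝ *ᵥ v) ≤ v ⬝ᵥ (H'.lapMatrix ℝ *ᵥ v) := by
  simp only [← toLinearMap₂'_apply', lapMatrix_toLinearMap₂']
  gcongr with i _ j _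
  split_ifs with hH hH'
  · rfl
  · exact absurd (h hH) hH'
  · positivity
  · rfl

end SimpleGraph

section TokenGraph

variable {V : Type*} [DecidableEq V] {k : ℕ}

theorem tokenGraph_mono {G G' : SimpleGraph V} (h : G ≤ G') :
    tokenGraph G k ≤ tokenGraph G' k :=
  fun _ _ ⟨a, b, hab, hA, hB⟩ => ⟨a, b, h hab, hA, hB⟩

theorem tokenGraph_top_adj_iff {A B : {s : Finset V // #s = k}} :
    (tokenGraph ⊤ k).Adj A B ↔ #(A.1 ∩ B.1) + 1 = k := by
  have hA := card_sdiff_add_card_inter A.1 B.1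
  have hB := card_sdiff_add_card_inter B.1 A.1
  rw [A.2] at hA
  rw [B.2, inter_comm] at hB
  constructor
  · rintro ⟨a, b, -, hab, -⟩
    rw [hab, card_singleton] at hA
    omega
  · intro h
    obtain ⟨a, ha⟩ := card_eq_one.mp (show #(A.1 \ B.1) = 1 by omega)
    obtain ⟨b, hb⟩ := card_eq_one.mp (show #(B.1 \ A.1) = 1 by omega)
    have haB : a ∉ B.1 := (mem_sdiff.mp (ha ▸ mem_singleton_self a)).2
    have hbB : b ∈ B.1 := (mem_sdiff.mp (hb ▸ mem_singleton_self b)).1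
    exact ⟨a, b, (ne_of_mem_of_not_mem hbB haB).symm, ha, hb⟩

theorem card_inter_lt_of_ne {A B : {s : Finset V // #s = k}} (h : A ≠ B) :
    #(A.1 ∩ B.1) < k := by
  have hAB : ¬ A.1 ⊆ B.1 := fun hAB =>
    h (Subtype.ext (eq_of_subset_of_card_le hAB (by rw [A.2, B.2])))
  simpa [A.2] using card_lt_card (inf_lt_left.mpr hAB)

theorem tokenGraph_degree_le [Fintype V] (G : SimpleGraph V) (A : {s : Finset V // #s = k})
    [Fintype ((tokenGraph G k).neighborSet A)] :
    (tokenGraph G k).degree A ≤ k * (Fintype.card V - k) := by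
  have hcard : #(A.1.powersetCard 1 ×ˢ A.1ᶜ.powersetCard 1) = k * (Fintype.card V - k) := by
    simp [card_compl, A.2]
  rw [← card_neighborFinset_eq_degree, ← hcard]
  refine card_le_card_of_injOn (fun B => (A.1 \ B.1, B.1 \ A.1)) ?_ ?_
  · rintro B hB
    obtain ⟨a, b, -, ha, hb⟩ := (mem_neighborFinset _ _ _).mp hB
    have haA := (mem_sdiff.mp (ha ▸ mem_singleton_self a)).1
    have hbA := (mem_sdiff.mp (hb ▸ mem_singleton_self b)).2
    simp [ha, hb, haA, hbA]
  · intro B _ C _ h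
    simp only [Prod.mk.injEq] at h
    apply Subtype.ext
    rw [← sdiff_union_inter B.1 A.1, ← sdiff_union_inter C.1 A.1, inter_comm B.1, inter_comm C.1,
      ← sdiff_sdiff_self_left, ← sdiff_sdiff_self_left, h.1, h.2]

end TokenGraph

section InclusionMatrix

variable (V : Type*) [DecidableEq V]

noncomputable def inclusionMatrix (k j : ℕ) :
    Matrix {s : Finset V // #s = k} {s : Finset V // #s = j} ℝ :=
  of fun A S => if S.1 ⊆ A.1 then 1 else 0

variable {V} [Fintype V] {k : ℕ}

theorem inclusionMatrix_mul_transpose_apply (j : ℕ) (A B : {s : Finset V // #s = k}) :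
    (inclusionMatrix V k j * (inclusionMatrix V k j)ᵀ) A B = (#(A.1 ∩ B.1)).choose j := by
  simp only [mul_apply, transpose_apply, inclusionMatrix, of_apply, mul_ite, mul_one, mul_zero,
    ← ite_and, ← subset_inter_iff, sum_boole, ← card_powersetCard]
  rw [inter_comm B.1 A.1]
  congr 1
  refine card_bij (fun S _ => S.1) ?_ (fun S _ T _ h => Subtype.ext h) ?_
  · intro S hS
    exact mem_powersetCard.mpr ⟨(mem_filter.mp hS).2, S.2⟩
  · intro s hs
    obtain ⟨hsub, hcard⟩ := mem_powersetCard.mp hs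
    exact ⟨⟨s, hcard⟩, mem_filter.mpr ⟨mem_univ _, hsub⟩, rfl⟩

theorem lapMatrix_tokenGraph_top_add_inclusionMatrix_mul_transpose
    [DecidableRel (tokenGraph (⊤ : SimpleGraph V) k).Adj] (hk : 1 ≤ k) :
    (tokenGraph ⊤ k).lapMatrix ℝ + inclusionMatrix V k (k - 1) * (inclusionMatrix V k (k - 1))ᵀ =
      diagonal fun A => ((tokenGraph ⊤ k).degree A + k : ℝ) := by
  ext A B
  rw [Matrix.add_apply, inclusionMatrix_mul_transpose_apply, lapMatrix, Matrix.sub_apply,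
    degMatrix, diagonal_apply, diagonal_apply, adjMatrix_apply]
  by_cases hAB : A = B
  · subst hAB
    simp [A.2, Nat.choose_symm hk]
  · rw [if_neg hAB, if_neg hAB]
    have hlt := card_inter_lt_of_ne hAB
    split_ifs with hadj <;> rw [tokenGraph_top_adj_iff] at hadj
    · simp [show #(A.1 ∩ B.1) = k - 1 by omega]
    · simp [Nat.choose_eq_zero_of_lt (show #(A.1 ∩ B.1) < k - 1 by omega)]

theorem dotProduct_lapMatrix_tokenGraph_top_mulVec_le
    [DecidableRel (tokenGraph (⊤ : SimpleGraph V) k).Adj] (hk : 1 ≤ k)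
    (hkV : k ≤ Fintype.card V) (v : {s : Finset V // #s = k} → ℝ) :
    v ⬝ᵥ ((tokenGraph ⊤ k).lapMatrix ℝ *ᵥ v) ≤
      k * (Fintype.card V - k + 1) * (v ⬝ᵥ v) := by
  set W := inclusionMatrix V k (k - 1)
  rw [eq_sub_of_add_eq (lapMatrix_tokenGraph_top_add_inclusionMatrix_mul_transpose hk),
    sub_mulVec, dotProduct_sub]
  have hW : 0 ≤ v ⬝ᵥ ((W * Wᵀ) *ᵥ v) := by
    simpa [conjTranspose_eq_transpose_of_trivial] using
      (posSemidef_self_mul_conjTranspose W).dotProduct_mulVec_nonneg v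
  have hdiag : v ⬝ᵥ ((diagonal fun A => ((tokenGraph ⊤ k).degree A + k : ℝ)) *ᵥ v) ≤
      k * (Fintype.card V - k + 1) * (v ⬝ᵥ v) := by
    simp only [dotProduct, mulVec_diagonal, mul_sum]
    refine sum_le_sum fun A _ => ?_
    have hdeg : ((tokenGraph ⊤ k).degree A : ℝ) ≤ k * (Fintype.card V - k) := by
      simpa [Nat.cast_sub hkV] using (Nat.cast_le (α := ℝ)).mpr (tokenGraph_degree_le ⊤ A)
    nlinarith [mul_self_nonneg (v A)]
  linarith

end InclusionMatrix

theorem k_connectivity_and_radius_bounds (n k : ℕ) (G : SimpleGraph (Fin n))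
    (hk : 1 ≤ k) (hkn : k ≤ n / 2) :
    (∀ α : ℝ,
      IsLeast {x : ℝ | x ∈ lapSpec (tokenGraph G k) - lapSpec (tokenGraph G (k - 1))} α →
      α ≤ (k : ℝ) * ((n : ℝ) - k + 1)) ∧
    (∀ ρ : ℝ,
      IsGreatest {x : ℝ | x ∈ lapSpec (tokenGraph G k) - lapSpec (tokenGraph G (k - 1))} ρ →
      ρ ≤ (k : ℝ) * ((n : ℝ) - k + 1)) := by
  have hkV : k ≤ Fintype.card (Fin n) := by simpa using hkn.trans (Nat.div_le_self n 2)
  have hspec : ∀ x ∈ lapSpec (tokenGraph G k) - lapSpec (tokenGraph G (k - 1)),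
      x ≤ k * (n - k + 1) := by
    intro x hx
    refine le_of_mem_roots_charpoly_of_dotProduct_mulVec_le (fun v => ?_)
      (Multiset.mem_of_le tsub_le_self hx)
    calc v ⬝ᵥ ((tokenGraph G k).lapMatrix ℝ *ᵥ v)
        ≤ v ⬝ᵥ ((tokenGraph ⊤ k).lapMatrix ℝ *ᵥ v) :=
          dotProduct_lapMatrix_mulVec_mono (tokenGraph_mono le_top) v
      _ ≤ k * (n - k + 1) * (v ⬝ᵥ v) := by
          simpa using dotProduct_lapMatrix_tokenGraph_top_mulVec_le hk hkV v
  exact ⟨fun α hα => hspec α hα.1, fun ρ hρ => hspec ρ hρ.1⟩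
end

section
/- Let G be a connected graph with spectral radius ρ(G) and vertex-connectivity κ > 1. For 1 ≤ k < κ, the spectral radius of the k-token graph satisfies ρ(F_k(G)) ≤ k·ρ^{k−1}_M(G), where ρ^{k−1}_M(G) is the maximum spectral radius of G∖U over (k−1)-subsets U of V(G). -/
open Finset
open scoped Classical

noncomputable def specRad {m : Type*} [Fintype m] (M : Matrix m m ℝ) : ℝ :=
  sSup {μ : ℝ | ∃ v : m → ℝ, v ≠ 0 ∧ M.mulVec v = μ • v}

noncomputable def delSpecRadSet {V : Type*} [Fintype V] [DecidableEq V]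
    (G : SimpleGraph V) (k : ℕ) : Set ℝ :=
  {r : ℝ | ∃ U : Finset V, U.card = k ∧
    r = specRad ((G.adjMatrix ℝ).submatrix
      (fun x : {v : V // v ∉ U} => (x : V)) (fun x : {v : V // v ∉ U} => (x : V)))}

/-!
Every edge `{A, B}` of `F_{k+1}(G)` is determined by `S = A ∩ B`, a `k`-set, together with an
edge `ab` of `G ∖ S`, via `A = S ∪ {a}` and `B = S ∪ {b}`. Hence for a vector `x` on the
`(k+1)`-sets, `xᵀ A(F_{k+1}(G)) x = ∑_S y_Sᵀ A(G ∖ S) y_S` with `y_S v = x (S ∪ {v})`, and each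
term is at most `ρ(G ∖ S) ‖y_S‖² ≤ ρ^k_M(G) ‖y_S‖²`. Each `(k+1)`-set arises from exactly `k + 1`
pairs `(S, v)`, so `∑_S ‖y_S‖² = (k+1) ‖x‖²`, and the Rayleigh bound gives
`ρ(F_{k+1}(G)) ≤ (k+1) ρ^k_M(G)`. Vectors on `(k+1)`-sets are extended by zero to all finsets, so
that the double counting runs over unrestricted finsets.
-/

open Matrix

section Spectral

variable {m : Type*} [Fintype m] {M : Matrix m m ℝ}

theorem specRad_le_of_forall_dotProduct_mulVec_le {c : ℝ} (hc : 0 ≤ c)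
    (h : ∀ x, x ⬝ᵥ M *ᵥ x ≤ c * (x ⬝ᵥ x)) : specRad M ≤ c := by
  refine Real.sSup_le (fun μ ⟨v, hv, hMv⟩ => ?_) hc
  have hvv : 0 < v ⬝ᵥ v := by simpa using dotProduct_self_star_pos_iff.mpr hv
  have := h v
  rw [hMv, dotProduct_smul, smul_eq_mul] at this
  exact le_of_mul_le_mul_right this hvv

variable [DecidableEq m]

theorem specRad_eq_sSup_spectrum (M : Matrix m m ℝ) : specRad M = sSup (spectrum ℝ M) := by
  rw [specRad, ← Matrix.spectrum_toLin']
  congr 1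
  ext μ
  rw [Set.mem_ofPred_eq, ← Module.End.hasEigenvalue_iff_mem_spectrum]
  constructor
  · rintro ⟨v, hv, hMv⟩
    exact Module.End.hasEigenvalue_of_hasEigenvector ⟨Module.End.mem_eigenspace_iff.mpr hMv, hv⟩
  · intro h
    obtain ⟨v, hv, hv0⟩ := h.exists_hasEigenvector
    exact ⟨v, hv0, Module.End.mem_eigenspace_iff.mp hv⟩

theorem le_specRad_of_mem_spectrum {μ : ℝ} (hμ : μ ∈ spectrum ℝ M) : μ ≤ specRad M :=
  specRad_eq_sSup_spectrum M ▸ le_csSup M.finite_real_spectrum.bddAbove hμ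

theorem dotProduct_mulVec_le_specRad_mul (hM : M.IsHermitian) (x : m → ℝ) :
    x ⬝ᵥ M *ᵥ x ≤ specRad M * (x ⬝ᵥ x) := by
  have hpsd : (algebraMap ℝ _ (specRad M) - M).PosSemidef := by
    refine posSemidef_iff_isHermitian_and_spectrum_nonneg.mpr ⟨?_, ?_⟩
    · exact (IsSelfAdjoint.algebraMap _ (IsSelfAdjoint.all _)).sub hM
    · rw [← spectrum.singleton_sub_eq]
      rintro _ ⟨_, rfl, μ, hμ, rfl⟩
      exact sub_nonneg.mpr (le_specRad_of_mem_spectrum hμ)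
  have := hpsd.dotProduct_mulVec_nonneg x
  rw [Algebra.algebraMap_eq_smul_one, sub_mulVec, smul_mulVec, one_mulVec, star_trivial,
    dotProduct_sub, dotProduct_smul, smul_eq_mul] at this
  linarith

theorem diag_le_specRad (hM : M.IsHermitian) (i : m) : M i i ≤ specRad M := by
  simpa using dotProduct_mulVec_le_specRad_mul hM (Pi.single i 1)

theorem specRad_nonneg (hM : M.IsHermitian) (hdiag : ∀ i, 0 ≤ M i i) : 0 ≤ specRad M := by
  cases isEmpty_or_nonempty m with
  | inl _ => exact Real.sSup_nonneg fun μ ⟨v, hv, _⟩ => absurd (Subsingleton.elim v 0) hv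
  | inr h => exact (hdiag h.some).trans (diag_le_specRad hM h.some)

end Spectral

section DoubleCounting

variable {V : Type*} [DecidableEq V]

theorem insert_inter_insert_of_ne {S : Finset V} {a b : V} (ha : a ∉ S) (hab : a ≠ b) :
    insert a S ∩ insert b S = S := by
  grind

theorem eq_insert_inter_of_sdiff_eq_singleton {A B : Finset V} {a : V} (h : A \ B = {a}) :
    A = insert a (A ∩ B) := by
  rw [Finset.insert_eq, ← h, Finset.sdiff_union_inter]

variable [Fintype V]

theorem sum_sum_compl_insert {M : Type*} [AddCommMonoid M] (F : Finset V → V → M) :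
    ∑ S : Finset V, ∑ a ∈ Sᶜ, F (insert a S) a = ∑ A : Finset V, ∑ a ∈ A, F A a := by
  rw [Finset.sum_sigma', Finset.sum_sigma']
  refine Finset.sum_nbij' (fun p => ⟨insert p.2 p.1, p.2⟩) (fun p => ⟨p.1.erase p.2, p.2⟩)
    ?_ ?_ ?_ ?_ ?_ <;> simp +contextual

theorem sum_tokenAdj_eq (G : SimpleGraph V) (W : Finset V → ℝ) :
    ∑ A : Finset V, ∑ B : Finset V,
        (if ∃ a b, G.Adj a b ∧ A \ B = {a} ∧ B \ A = {b} then W A * W B else 0) =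
      ∑ S : Finset V, ∑ a ∈ Sᶜ, ∑ b ∈ Sᶜ,
        if G.Adj a b then W (insert a S) * W (insert b S) else 0 := by
  simp_rw [← Finset.sum_product', Finset.sum_sigma', ← Finset.sum_filter]
  symm
  refine Finset.sum_nbij (fun p => (insert p.2.1 p.1, insert p.2.2 p.1)) ?_ ?_ ?_ fun _ _ => rfl
  · rintro ⟨S, a, b⟩ h
    simp only [Finset.mem_filter, Finset.mem_sigma, Finset.mem_product, Finset.mem_compl,
      Finset.mem_univ, true_and] at h ⊢
    obtain ⟨⟨ha, hb⟩, hab⟩ := h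
    exact ⟨a, b, hab, Finset.insert_sdiff_insert' hab.ne ha,
      Finset.insert_sdiff_insert' hab.ne.symm hb⟩
  · rintro ⟨S, a, b⟩ h ⟨S', a', b'⟩ h' e
    simp only [Finset.coe_filter, Finset.mem_sigma, Finset.mem_product, Finset.mem_compl,
      Finset.mem_univ, true_and, Set.mem_ofPred_eq, Prod.mk.injEq] at h h' e
    obtain ⟨⟨ha, hb⟩, hab⟩ := h
    obtain ⟨⟨ha', hb'⟩, hab'⟩ := h'
    obtain rfl : S = S' := by
      rw [← insert_inter_insert_of_ne ha hab.ne, e.1, e.2, insert_inter_insert_of_ne ha' hab'.ne]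
    rw [Finset.insert_inj ha, Finset.insert_inj hb] at e
    rw [e.1, e.2]
  · rintro ⟨A, B⟩ h
    simp only [Finset.coe_filter, Finset.mem_product, Finset.mem_univ, true_and,
      Set.mem_ofPred_eq] at h
    obtain ⟨a, b, hab, hA, hB⟩ := h
    refine ⟨⟨A ∩ B, a, b⟩, ?_, ?_⟩
    · simp [hab, Finset.mem_sdiff.mp (hA ▸ Finset.mem_singleton_self a),
        Finset.mem_sdiff.mp (hB ▸ Finset.mem_singleton_self b)]
    · show (insert a (A ∩ B), insert b (A ∩ B)) = (A, B)
      rw [← eq_insert_inter_of_sdiff_eq_singleton hA, Finset.inter_comm,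
        ← eq_insert_inter_of_sdiff_eq_singleton hB]

end DoubleCounting

section TokenVector

variable {V : Type*} [Fintype V] {k : ℕ} {W : Finset V → ℝ}

theorem sum_sum_mem_sq_eq_mul_dotProduct (hW : ∀ A : Finset V, A.card ≠ k → W A = 0) :
    ∑ A : Finset V, ∑ _a ∈ A, W A ^ 2 =
      k * ((fun A : {s : Finset V // s.card = k} => W A) ⬝ᵥ (fun A => W A)) := by
  have hA (A : Finset V) : ∑ _a ∈ A, W A ^ 2 = k * W A ^ 2 := by
    rw [Finset.sum_const, nsmul_eq_mul]
    by_cases hA : A.card = k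
    · rw [hA]
    · simp [hW A hA]
  simp only [hA, ← Finset.mul_sum, dotProduct, ← sq]
  congr 1
  exact (Fintype.sum_of_injective Subtype.val Subtype.val_injective _ _
    (fun A hA => by simp [hW A fun h => hA ⟨⟨A, h⟩, rfl⟩]) fun A => rfl).symm

variable [DecidableEq V]

theorem dotProduct_adjMatrix_tokenGraph_mulVec (G : SimpleGraph V)
    (hW : ∀ A : Finset V, A.card ≠ k → W A = 0) :
    (fun A : {s : Finset V // s.card = k} => W A) ⬝ᵥ
        (tokenGraph G k).adjMatrix ℝ *ᵥ (fun A => W A) =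
      ∑ A : Finset V, ∑ B : Finset V,
        if ∃ a b, G.Adj a b ∧ A \ B = {a} ∧ B \ A = {b} then W A * W B else 0 := by
  simp only [dotProduct, mulVec, SimpleGraph.adjMatrix_apply, ite_mul, one_mul, zero_mul,
    Finset.mul_sum, mul_ite, mul_zero]
  refine Fintype.sum_of_injective Subtype.val Subtype.val_injective _ _
    (fun A hA => by simp [hW A fun h => hA ⟨⟨A, h⟩, rfl⟩]) fun A => ?_
  exact Fintype.sum_of_injective Subtype.val Subtype.val_injective _ _
    (fun B hB => by simp [hW B fun h => hB ⟨⟨B, h⟩, rfl⟩]) fun B => if_congr Iff.rfl rfl rfl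

end TokenVector

section Deletion

variable {V : Type*} (G : SimpleGraph V)

noncomputable def deleteAdjMatrix (U : Finset V) : Matrix {v // v ∉ U} {v // v ∉ U} ℝ :=
  (G.adjMatrix ℝ).submatrix (↑) (↑)

theorem isHermitian_deleteAdjMatrix (U : Finset V) : (deleteAdjMatrix G U).IsHermitian :=
  (G.isHermitian_adjMatrix ℝ).submatrix _

variable [Fintype V] [DecidableEq V]

theorem specRad_deleteAdjMatrix_nonneg (U : Finset V) : 0 ≤ specRad (deleteAdjMatrix G U) :=
  specRad_nonneg (isHermitian_deleteAdjMatrix G U) fun i => by simp [deleteAdjMatrix]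

theorem sSup_delSpecRadSet_nonneg (k : ℕ) : 0 ≤ sSup (delSpecRadSet G k) :=
  Real.sSup_nonneg fun _ ⟨U, _, hr⟩ => hr ▸ specRad_deleteAdjMatrix_nonneg G U

theorem specRad_deleteAdjMatrix_le_sSup {U : Finset V} {k : ℕ} (hU : U.card = k) :
    specRad (deleteAdjMatrix G U) ≤ sSup (delSpecRadSet G k) := by
  refine le_csSup ((Set.finite_range fun U => specRad (deleteAdjMatrix G U)).subset ?_).bddAbove
    ⟨U, hU, rfl⟩
  rintro _ ⟨U, -, rfl⟩
  exact ⟨U, rfl⟩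

theorem sum_adj_compl_le_specRad_mul (S : Finset V) (f : V → ℝ) :
    ∑ a ∈ Sᶜ, ∑ b ∈ Sᶜ, (if G.Adj a b then f a * f b else 0) ≤
      specRad (deleteAdjMatrix G S) * ∑ a ∈ Sᶜ, f a ^ 2 := by
  have h := dotProduct_mulVec_le_specRad_mul (isHermitian_deleteAdjMatrix G S)
    fun x => f x
  have hsum (g : V → ℝ) : ∑ a ∈ Sᶜ, g a = ∑ x : {v // v ∉ S}, g x :=
    Finset.sum_subtype _ (fun _ => Finset.mem_compl) g
  simpa [hsum, dotProduct, mulVec, deleteAdjMatrix, SimpleGraph.adjMatrix_apply, Finset.mul_sum,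
    ite_mul, sq] using h

end Deletion

theorem specRad_adjMatrix_tokenGraph_succ_le {V : Type*} [Fintype V] [DecidableEq V]
    (G : SimpleGraph V) (k : ℕ) :
    specRad ((tokenGraph G (k + 1)).adjMatrix ℝ) ≤ (k + 1) * sSup (delSpecRadSet G k) := by
  set R := sSup (delSpecRadSet G k)
  refine specRad_le_of_forall_dotProduct_mulVec_le
    (mul_nonneg (by positivity) (sSup_delSpecRadSet_nonneg G k)) fun w => ?_
  obtain ⟨W, rfl, hW⟩ : ∃ W : Finset V → ℝ,
      (fun A : {s : Finset V // s.card = k + 1} => W A) = w ∧ ∀ A, A.card ≠ k + 1 → W A = 0 :=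
    ⟨fun A => if h : A.card = k + 1 then w ⟨A, h⟩ else 0, funext fun A => dif_pos A.2,
      fun A hA => dif_neg hA⟩
  have hS (S : Finset V) : ∑ a ∈ Sᶜ, ∑ b ∈ Sᶜ,
      (if G.Adj a b then W (insert a S) * W (insert b S) else 0) ≤
        R * ∑ a ∈ Sᶜ, W (insert a S) ^ 2 := by
    by_cases hSk : S.card = k
    · exact (sum_adj_compl_le_specRad_mul G S _).trans <| mul_le_mul_of_nonneg_right
        (specRad_deleteAdjMatrix_le_sSup G hSk) (Finset.sum_nonneg fun _ _ => sq_nonneg _)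
    · have h0 : ∀ a ∈ Sᶜ, W (insert a S) = 0 := fun a ha => hW _ <| by
        rw [Finset.card_insert_of_notMem (Finset.mem_compl.mp ha)]
        omega
      simp +contextual [h0]
  calc _ = ∑ S : Finset V, ∑ a ∈ Sᶜ, ∑ b ∈ Sᶜ,
        (if G.Adj a b then W (insert a S) * W (insert b S) else 0) := by
        rw [dotProduct_adjMatrix_tokenGraph_mulVec G hW, sum_tokenAdj_eq]
    _ ≤ ∑ S : Finset V, R * ∑ a ∈ Sᶜ, W (insert a S) ^ 2 := Finset.sum_le_sum fun S _ => hS S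
    _ = R * ∑ A : Finset V, ∑ _a ∈ A, W A ^ 2 := by
        rw [← Finset.mul_sum, sum_sum_compl_insert fun A _ => W A ^ 2]
    _ = _ := by
        rw [sum_sum_mem_sq_eq_mul_dotProduct hW]
        push_cast
        ring

theorem token_spectral_radius_upper_bound_general {V : Type*} [Fintype V] [DecidableEq V]
    (G : SimpleGraph V) (k : ℕ) (hk1 : 1 ≤ k) :
    specRad ((tokenGraph G k).adjMatrix ℝ) ≤ (k : ℝ) * sSup (delSpecRadSet G (k - 1)) := by
  obtain ⟨k, rfl⟩ := Nat.exists_eq_add_of_le' hk1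
  simpa using specRad_adjMatrix_tokenGraph_succ_le G k

theorem token_spectral_radius_upper_bound {V : Type*} [Fintype V] [DecidableEq V]
    (G : SimpleGraph V) (κ k : ℕ) (hG : G.Connected)
    (hκ : ∀ U : Finset V, U.card < κ → (G.induce {v : V | v ∉ U}).Connected)
    (hκ1 : 1 < κ) (hk1 : 1 ≤ k) (hkκ : k < κ) :
    specRad ((tokenGraph G k).adjMatrix ℝ) ≤ (k : ℝ) * sSup (delSpecRadSet G (k - 1)) :=
  token_spectral_radius_upper_bound_general G k hk1
end

section
/- Let G be a distance-regular graph with diameter d and intersection numbers a_i, b_i, c_i. The partition of the vertices of F_2(G) into cells C_1,...,C_d, where C_i consists of the pairs {u,v} with dist_G(u,v) = i, is equitable, and each vertex of C_i has exactly 2c_i neighbors in C_{i−1}, 2a_i neighbors in C_i, and 2b_i neighbors in C_{i+1}. -/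
open Finset
open scoped Classical

/-! A move in `F₂(G)` from `{u, v}` slides exactly one token along an edge of `G`: either `u` stays
and `v` moves to a neighbour `w`, landing in `{u, w}` at distance `dist u w`, or symmetrically.
Hence the neighbours of `{u, v}` in the cell `C_j` are counted by the number of neighbours of `v` at
distance `j` from `u` plus the number of neighbours of `u` at distance `j` from `v`; for
`dist u v = i` and `j ∈ {i - 1, i, i + 1}` both terms are the intersection number `c_i`, `a_i` or
`b_i`. -/

theorem SimpleGraph.exists_mem_pair_ne_dist_eq_iff {V : Type*} [DecidableEq V] (G : SimpleGraph V)
    {p q : V} (hpq : p ≠ q) (j : ℕ) :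
    (∃ x ∈ ({p, q} : Finset V), ∃ y ∈ ({p, q} : Finset V), x ≠ y ∧ G.dist x y = j) ↔
      G.dist p q = j := by
  simp only [mem_insert, mem_singleton]
  grind [SimpleGraph.dist_comm]

namespace tokenGraph

variable {V : Type*} [DecidableEq V] (G : SimpleGraph V) {u v : V}

theorem two_adj_pair_iff_of_mem (huv : u ≠ v) {B : {s : Finset V // s.card = 2}}
    (hu : u ∈ B.1) :
    (tokenGraph G 2).Adj ⟨{u, v}, card_pair huv⟩ B ↔ ∃ w, G.Adj v w ∧ B.1 = {u, w} := by
  constructor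
  · rintro ⟨e, f, hef, hA, hB⟩
    have he : e ∈ ({u, v} : Finset V) \ B.1 := hA ▸ mem_singleton_self e
    have hf : f ∈ B.1 \ {u, v} := hB ▸ mem_singleton_self f
    simp only [mem_sdiff, mem_insert, mem_singleton] at he hf
    have hev : e = v := by grind
    refine ⟨f, hev ▸ hef, (eq_of_subset_of_card_le ?_ ?_).symm⟩
    · grind [insert_subset_iff]
    · rw [B.2, card_pair (by grind)]
  · rintro ⟨w, hvw, hB⟩
    have hwu : w ≠ u := by
      rintro rfl
      simpa [hB] using B.2
    refine ⟨v, w, hvw, ?_, ?_⟩ <;> ext x <;> simp only [hB, mem_sdiff, mem_insert, mem_singleton]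
      <;> grind [G.ne_of_adj hvw]

theorem notMem_iff_mem_of_adj_pair (huv : u ≠ v) {B : {s : Finset V // s.card = 2}}
    (hB : (tokenGraph G 2).Adj ⟨{u, v}, card_pair huv⟩ B) : u ∉ B.1 ↔ v ∈ B.1 := by
  obtain ⟨e, -, -, hA, -⟩ := hB
  have hcard := congrArg card hA
  rw [card_singleton] at hcard
  constructor
  · intro hu
    by_contra hv
    rw [sdiff_eq_self_of_disjoint (by simp [hu, hv]), card_pair huv] at hcard
    omega
  · intro hv hu
    rw [sdiff_eq_empty_iff_subset.mpr (by simp [insert_subset_iff, hu, hv]), card_empty] at hcard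
    omega

theorem card_neighborFinset_filter_mem [Fintype V] (huv : u ≠ v) (P : Finset V → Prop)
    [DecidablePred P] :
    #(((tokenGraph G 2).neighborFinset ⟨{u, v}, card_pair huv⟩).filter
        (fun B => P B.1 ∧ u ∈ B.1)) =
      #((G.neighborFinset v).filter (fun w => w ≠ u ∧ P {u, w})) := by
  symm
  refine card_bij (fun w hw => ⟨{u, w}, card_pair (mem_filter.mp hw).2.1.symm⟩) ?_ ?_ ?_
  · intro w hw
    simp only [mem_filter, SimpleGraph.mem_neighborFinset] at hw ⊢
    exact ⟨(two_adj_pair_iff_of_mem G huv (mem_insert_self u _)).mpr ⟨w, hw.1, rfl⟩,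
      hw.2.2, mem_insert_self u _⟩
  · intro w₁ hw₁ w₂ _ h
    have hpair : ({u, w₁} : Finset V) = {u, w₂} := congrArg Subtype.val h
    have hw₁' : w₁ ∈ ({u, w₂} : Finset V) := hpair ▸ mem_insert_of_mem (mem_singleton_self w₁)
    simpa [(mem_filter.mp hw₁).2.1] using hw₁'
  · intro B hB
    simp only [mem_filter, SimpleGraph.mem_neighborFinset] at hB
    obtain ⟨hadj, hP, hu⟩ := hB
    obtain ⟨w, hvw, hBw⟩ := (two_adj_pair_iff_of_mem G huv hu).mp hadj
    have hwu : w ≠ u := by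
      rintro rfl
      simpa [hBw] using B.2
    exact ⟨w, by simpa [hvw, hwu, ← hBw] using hP, Subtype.ext hBw.symm⟩

theorem card_neighborFinset_filter_dist_eq [Fintype V] (huv : u ≠ v) {j : ℕ} (hj : 1 ≤ j) :
    #(((tokenGraph G 2).neighborFinset ⟨{u, v}, card_pair huv⟩).filter
        (fun B => ∃ x ∈ B.1, ∃ y ∈ B.1, x ≠ y ∧ G.dist x y = j)) =
      #((G.neighborFinset v).filter (fun w => G.dist u w = j)) +
        #((G.neighborFinset u).filter (fun w => G.dist v w = j)) := by
  have hcount : ∀ {p q : V} (hpq : p ≠ q),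
      #(((tokenGraph G 2).neighborFinset ⟨{p, q}, card_pair hpq⟩).filter
        (fun B => (∃ x ∈ B.1, ∃ y ∈ B.1, x ≠ y ∧ G.dist x y = j) ∧ p ∈ B.1)) =
      #((G.neighborFinset q).filter (fun w => G.dist p w = j)) := by
    intro p q hpq
    rw [card_neighborFinset_filter_mem G hpq
      (fun s => ∃ x ∈ s, ∃ y ∈ s, x ≠ y ∧ G.dist x y = j)]
    congr 1
    refine filter_congr fun w _ => ⟨fun ⟨hwp, h⟩ => ?_, fun h => ?_⟩
    · exact (G.exists_mem_pair_ne_dist_eq_iff hwp.symm j).mp h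
    · have hwp : w ≠ p := by
        rintro rfl
        rw [SimpleGraph.dist_self] at h
        omega
      exact ⟨hwp, (G.exists_mem_pair_ne_dist_eq_iff hwp.symm j).mpr h⟩
  have hswap : (⟨{u, v}, card_pair huv⟩ : {s : Finset V // s.card = 2}) =
      ⟨{v, u}, card_pair huv.symm⟩ := Subtype.ext (pair_comm u v)
  rw [← card_filter_add_card_filter_not (p := fun B => u ∈ B.1), filter_filter, filter_filter,
    hcount huv, ← hcount huv.symm, ← hswap]
  congr 2
  exact filter_congr fun B hB => and_congr_right fun _ =>
    notMem_iff_mem_of_adj_pair G huv ((SimpleGraph.mem_neighborFinset _ _ _).mp hB)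

end tokenGraph

theorem distance_regular_two_token_equitable_general {V : Type*} [Fintype V] [DecidableEq V]
    (G : SimpleGraph V)
    (d : ℕ)
    (a b c : ℕ → ℕ)
    (hc : ∀ i, 1 ≤ i → i ≤ d → ∀ u v : V, G.dist u v = i →
      ((G.neighborFinset v).filter (fun w => G.dist u w = i - 1)).card = c i)
    (ha : ∀ i, 1 ≤ i → i ≤ d → ∀ u v : V, G.dist u v = i →
      ((G.neighborFinset v).filter (fun w => G.dist u w = i)).card = a i)
    (hb : ∀ i, 1 ≤ i → i ≤ d → ∀ u v : V, G.dist u v = i →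
      ((G.neighborFinset v).filter (fun w => G.dist u w = i + 1)).card = b i) :
    ∀ (i : ℕ), 1 ≤ i → i ≤ d → ∀ (u v : V) (hne : u ≠ v), G.dist u v = i →
      (2 ≤ i →
        (((tokenGraph G 2).neighborFinset ⟨{u, v}, Finset.card_pair hne⟩).filter
          (fun B => ∃ x ∈ B.1, ∃ y ∈ B.1, x ≠ y ∧ G.dist x y = i - 1)).card = 2 * c i) ∧
      (((tokenGraph G 2).neighborFinset ⟨{u, v}, Finset.card_pair hne⟩).filter
        (fun B => ∃ x ∈ B.1, ∃ y ∈ B.1, x ≠ y ∧ G.dist x y = i)).card = 2 * a i ∧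
      (((tokenGraph G 2).neighborFinset ⟨{u, v}, Finset.card_pair hne⟩).filter
        (fun B => ∃ x ∈ B.1, ∃ y ∈ B.1, x ≠ y ∧ G.dist x y = i + 1)).card = 2 * b i := by
  intro i hi hid u v huv huv_dist
  have hvu_dist : G.dist v u = i := G.dist_comm.trans huv_dist
  refine ⟨fun hi2 => ?_, ?_, ?_⟩
  · rw [tokenGraph.card_neighborFinset_filter_dist_eq G huv (by omega),
      hc i hi hid u v huv_dist, hc i hi hid v u hvu_dist, two_mul]
  · rw [tokenGraph.card_neighborFinset_filter_dist_eq G huv hi,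
      ha i hi hid u v huv_dist, ha i hi hid v u hvu_dist, two_mul]
  · rw [tokenGraph.card_neighborFinset_filter_dist_eq G huv (by omega),
      hb i hi hid u v huv_dist, hb i hi hid v u hvu_dist, two_mul]

theorem distance_regular_two_token_equitable {V : Type*} [Fintype V] [DecidableEq V]
    (G : SimpleGraph V) (hG : G.Connected)
    (d : ℕ) (hd : ∀ u v : V, G.dist u v ≤ d)
    (a b c : ℕ → ℕ)
    (hc : ∀ i, 1 ≤ i → i ≤ d → ∀ u v : V, G.dist u v = i →
      ((G.neighborFinset v).filter (fun w => G.dist u w = i - 1)).card = c i)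
    (ha : ∀ i, 1 ≤ i → i ≤ d → ∀ u v : V, G.dist u v = i →
      ((G.neighborFinset v).filter (fun w => G.dist u w = i)).card = a i)
    (hb : ∀ i, 1 ≤ i → i ≤ d → ∀ u v : V, G.dist u v = i →
      ((G.neighborFinset v).filter (fun w => G.dist u w = i + 1)).card = b i) :
    ∀ (i : ℕ), 1 ≤ i → i ≤ d → ∀ (u v : V) (hne : u ≠ v), G.dist u v = i →
      (2 ≤ i →
        (((tokenGraph G 2).neighborFinset ⟨{u, v}, Finset.card_pair hne⟩).filter
          (fun B => ∃ x ∈ B.1, ∃ y ∈ B.1, x ≠ y ∧ G.dist x y = i - 1)).card = 2 * c i) ∧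
      (((tokenGraph G 2).neighborFinset ⟨{u, v}, Finset.card_pair hne⟩).filter
        (fun B => ∃ x ∈ B.1, ∃ y ∈ B.1, x ≠ y ∧ G.dist x y = i)).card = 2 * a i ∧
      (((tokenGraph G 2).neighborFinset ⟨{u, v}, Finset.card_pair hne⟩).filter
        (fun B => ∃ x ∈ B.1, ∃ y ∈ B.1, x ≠ y ∧ G.dist x y = i + 1)).card = 2 * b i :=
  distance_regular_two_token_equitable_general G d a b c hc ha hb
end
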